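/- (Pointwise vanishing of the optimal L² Stein critic.) Fix μ₁ ∈ ℝ, σ > 0, π ∈ (0,1) and x ∈ ℝ. Let q(x) = φ_{μ₁,σ}(x) and p_{μ₂}(x) = π φ_{μ₁,σ}(x) + (1−π) φ_{μ₂,σ}(x). Then q(x)·s_{p_{μ₂}}(x) − q'(x) → 0 as μ₂ → +∞, where q' denotes the derivative of q. -/

import Mathlib

open MeasureTheory Filter

/-- Gaussian density with mean `μ` and standard deviation `σ`. -/
noncomputable def gaussian (μ σ : ℝ) (x : ℝ) : ℝ :=
  (σ * Real.sqrt (2 * Real.pi))⁻¹ * Real.exp (-(x - μ) ^ 2 / (2 * σ ^ 2))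

/-- The score of a density `ρ`: the derivative of its log. -/
noncomputable def score (ρ : ℝ → ℝ) (x : ℝ) : ℝ :=
  deriv (fun y => Real.log (ρ y)) x

/-- Fisher divergence between densities `q` and `p`. -/
noncomputable def fisherDiv (q p : ℝ → ℝ) : ℝ :=
  ∫ x : ℝ, q x * (score q x - score p x) ^ 2

/-!
With `g = φ_{μ₂,σ}` the mixture is `p = w q + (1 - w) g`, so `q s_p = q (w q' + (1 - w) g') / p`.
Since the Gaussian density is symmetric in `x` and its mean, both `g(x)` and
`g'(x) = (μ₂ - x) g(x) / σ²` are Gaussian tails in `μ₂`; they vanish as `μ₂ → ∞`, leaving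
`q s_p → q · w q' / (w q) = q'`.
-/

open Real Topology

lemma score_eq_of_hasDerivAt {ρ : ℝ → ℝ} {ρ' x : ℝ} (h : HasDerivAt ρ ρ' x) (hx : ρ x ≠ 0) :
    score ρ x = ρ' / ρ x :=
  (h.log hx).deriv

lemma gaussian_pos (μ : ℝ) {σ : ℝ} (hσ : 0 < σ) (x : ℝ) : 0 < gaussian μ σ x := by
  unfold gaussian
  positivity

lemma gaussian_comm (μ σ x : ℝ) : gaussian μ σ x = gaussian x σ μ := by
  simp only [gaussian, sub_sq_comm x μ]

lemma hasDerivAt_gaussian (μ : ℝ) {σ : ℝ} (hσ : 0 < σ) (x : ℝ) :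
    HasDerivAt (gaussian μ σ) (-(x - μ) / σ ^ 2 * gaussian μ σ x) x := by
  have hexp : HasDerivAt (fun y => -(y - μ) ^ 2 / (2 * σ ^ 2)) (-(x - μ) / σ ^ 2) x :=
    ((((hasDerivAt_id' x).sub_const μ).pow 2).neg.div_const (2 * σ ^ 2)).congr_deriv
      (by field_simp; ring)
  exact (hexp.exp.const_mul (σ * √(2 * π))⁻¹).congr_deriv (by simp only [gaussian]; ring)

lemma tendsto_sub_const_cocompact (μ : ℝ) :
    Tendsto (fun y : ℝ => y - μ) (cocompact ℝ) (cocompact ℝ) :=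
  (Homeomorph.subRight μ).isClosedEmbedding.tendsto_cocompact

lemma tendsto_abs_rpow_mul_gaussian_cocompact (μ : ℝ) {σ : ℝ} (hσ : 0 < σ) (s : ℝ) :
    Tendsto (fun y => |y - μ| ^ s * gaussian μ σ y) (cocompact ℝ) (𝓝 0) := by
  have h := ((tendsto_rpow_abs_mul_exp_neg_mul_sq_cocompact (a := (2 * σ ^ 2)⁻¹)
    (by positivity) s).comp (tendsto_sub_const_cocompact μ)).const_mul (σ * √(2 * π))⁻¹
  rw [mul_zero] at h
  refine h.congr fun y => ?_
  simp only [gaussian, Function.comp_apply]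
  ring_nf

lemma tendsto_gaussian_cocompact (μ : ℝ) {σ : ℝ} (hσ : 0 < σ) :
    Tendsto (gaussian μ σ) (cocompact ℝ) (𝓝 0) := by
  simpa using tendsto_abs_rpow_mul_gaussian_cocompact μ hσ 0

lemma tendsto_sub_mul_gaussian_cocompact (μ : ℝ) {σ : ℝ} (hσ : 0 < σ) :
    Tendsto (fun y => (y - μ) * gaussian μ σ y) (cocompact ℝ) (𝓝 0) := by
  rw [tendsto_zero_iff_norm_tendsto_zero]
  simpa [abs_mul, abs_of_pos (gaussian_pos _ hσ _)] using
    tendsto_abs_rpow_mul_gaussian_cocompact μ hσ 1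

lemma tendsto_gaussian_mean_atTop {σ : ℝ} (hσ : 0 < σ) (x : ℝ) :
    Tendsto (fun μ => gaussian μ σ x) atTop (𝓝 0) := by
  simpa only [gaussian_comm _ σ x] using
    (tendsto_gaussian_cocompact x hσ).mono_left atTop_le_cocompact

lemma tendsto_deriv_gaussian_mean_atTop {σ : ℝ} (hσ : 0 < σ) (x : ℝ) :
    Tendsto (fun μ => deriv (gaussian μ σ) x) atTop (𝓝 0) := by
  have h := ((tendsto_sub_mul_gaussian_cocompact x hσ).mono_left atTop_le_cocompact).div_const
    (σ ^ 2)
  rw [zero_div] at h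
  refine h.congr fun μ => ?_
  rw [(hasDerivAt_gaussian μ hσ x).deriv, gaussian_comm μ σ x]
  ring

/-- pointwise vanishing of the optimal `L²` Stein critic:
`q(x)·s_{p_{μ₂}}(x) − q'(x) → 0` as `μ₂ → +∞`. -/
theorem optimal_L2_critic_pointwise_vanishing (μ₁ σ w : ℝ) (hσ : 0 < σ)
    (hw : w ∈ Set.Ioo (0 : ℝ) 1) (x : ℝ) :
    Tendsto
      (fun μ₂ => gaussian μ₁ σ x *
          score (fun y => w * gaussian μ₁ σ y + (1 - w) * gaussian μ₂ σ y) x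
        - deriv (gaussian μ₁ σ) x)
      atTop (nhds 0) := by
  obtain ⟨hw₀, hw₁⟩ := hw
  have hq := gaussian_pos μ₁ hσ x
  set q := gaussian μ₁ σ x
  set q' := deriv (gaussian μ₁ σ) x
  have hscore (μ₂ : ℝ) :
      score (fun y => w * gaussian μ₁ σ y + (1 - w) * gaussian μ₂ σ y) x =
        (w * q' + (1 - w) * deriv (gaussian μ₂ σ) x) / (w * q + (1 - w) * gaussian μ₂ σ x) := by
    have h₁ := (hasDerivAt_gaussian μ₁ hσ x).differentiableAt.hasDerivAt
    have h₂ := (hasDerivAt_gaussian μ₂ hσ x).differentiableAt.hasDerivAt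
    exact score_eq_of_hasDerivAt ((h₁.const_mul w).add (h₂.const_mul (1 - w)))
      (add_pos (mul_pos hw₀ hq) (mul_pos (sub_pos.2 hw₁) (gaussian_pos μ₂ hσ x))).ne'
  have hnum := ((tendsto_deriv_gaussian_mean_atTop hσ x).const_mul (1 - w)).const_add (w * q')
  have hden := ((tendsto_gaussian_mean_atTop hσ x).const_mul (1 - w)).const_add (w * q)
  have hlim := ((hnum.div hden (by positivity)).const_mul q).sub_const q'
  have hzero : q * ((w * q' + (1 - w) * 0) / (w * q + (1 - w) * 0)) - q' = 0 := by
    field_simp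
    ring
  rw [hzero] at hlim
  exact hlim.congr fun μ₂ => by rw [hscore]; rfl
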